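/- Let r ≥ 1 and C > 0, and suppose the generator L satisfies the r-logSob inequality with constant C. Then for all real q < p < 1, every f : Ω → (0,∞), and every t ≥ (C/4)·log((1−q)/(1−p)), one has ‖T_t f‖_q ≥ ‖f‖_p. -/

import Mathlib

/-! Along the exponent `Q s = 1 - (1 - p) e^{4s/C}`, the derivative of `s ↦ log ‖T_s f‖_{Q s}` is
`(Q' Ent(u^Q) - Q² 𝓔(u^{Q-1}, u)) / (Q² E u^Q)` with `u = T_s f`, which is nonnegative as soon as
the `Q`-logSob inequality holds with constant `C`; at the one time where `Q` vanishes the function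
is still continuous, by l'Hôpital. The `r`-logSob inequality with `r ≥ 1` implies the `m`-logSob
inequality for every `m < 1`, `m ≠ 0`: the Dirichlet form is a nonnegative combination of two-point
terms `(f x - f ω) (g x - g ω)`, and the two-point inequalities follow from the log-convexity of
`κ ↦ ∫_b^a u^{κ-1} du`. Enlarging `C` until the threshold equals `t`, the exponent runs from `p` at
time `0` to `q` at time `t`. -/

open Real Finset

noncomputable section

variable {Ω : Type*}

/-- Expectation `E f = ∑ ω, μ ω * f ω`. -/
def pexp [Fintype Ω] (μ : Ω → ℝ) (f : Ω → ℝ) : ℝ := ∑ ω, μ ω * f ω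

/-- Dirichlet form `𝓔(f,g) = E[f · L g]`. -/
def dform [Fintype Ω] (μ : Ω → ℝ) (L : (Ω → ℝ) →ₗ[ℝ] (Ω → ℝ)) (f g : Ω → ℝ) : ℝ :=
  pexp μ fun ω => f ω * L g ω

/-- Entropy `Ent(f) = E[f log f] − (E f) log (E f)`. -/
def entE [Fintype Ω] (μ : Ω → ℝ) (f : Ω → ℝ) : ℝ :=
  pexp μ (fun ω => f ω * Real.log (f ω)) - pexp μ f * Real.log (pexp μ f)

/-- Variance `Var(f) = E[f²] − (E f)²`. -/
def varE [Fintype Ω] (μ : Ω → ℝ) (f : Ω → ℝ) : ℝ :=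
  pexp μ (fun ω => f ω ^ 2) - (pexp μ f) ^ 2

/-- The structural conditions on the Markov generator `L`: `L 1 = 0`, self-adjointness,
positive semidefiniteness, and nonnegativity of `L f` at a global maximum point of `f`. -/
def IsGen [Fintype Ω] (μ : Ω → ℝ) (L : (Ω → ℝ) →ₗ[ℝ] (Ω → ℝ)) : Prop :=
  L (fun _ => 1) = 0 ∧
  (∀ f g, pexp μ (fun ω => f ω * L g ω) = pexp μ (fun ω => g ω * L f ω)) ∧
  (∀ f, 0 ≤ pexp μ (fun ω => f ω * L f ω)) ∧
  (∀ (f : Ω → ℝ) (ω : Ω), (∀ x, f x ≤ f ω) → 0 ≤ L f ω)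

/-- The `p`-logSob inequality with constant `C` (with the conventions for `p = 0` and `p = 1`). -/
def LogSob [Fintype Ω] (μ : Ω → ℝ) (L : (Ω → ℝ) →ₗ[ℝ] (Ω → ℝ)) (p C : ℝ) : Prop :=
  if p = 0 then
    ∀ f : Ω → ℝ, (∀ ω, 0 < f ω) →
      varE μ (fun ω => Real.log (f ω)) ≤ -(C / 2) * dform μ L f (fun ω => (f ω)⁻¹)
  else if p = 1 then
    ∀ f : Ω → ℝ, (∀ ω, 0 < f ω) →
      entE μ f ≤ C / 4 * dform μ L f (fun ω => Real.log (f ω))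
  else
    ∀ f : Ω → ℝ, (∀ ω, 0 < f ω) →
      entE μ (fun ω => f ω ^ p) ≤
        C * p ^ 2 / (4 * (p - 1)) * dform μ L (fun ω => f ω ^ (p - 1)) f

/-- Markov semigroup `T t = e^{-tL}`. -/
def heat [Fintype Ω] (L : (Ω → ℝ) →ₗ[ℝ] (Ω → ℝ)) (t : ℝ) (f : Ω → ℝ) : Ω → ℝ :=
  NormedSpace.exp ((-t) • (LinearMap.toContinuousLinearMap L)) f

/-- `‖f‖_p` for positive `f` and arbitrary real `p`, with `‖f‖_0 = exp (E log f)`. -/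
def pnorm [Fintype Ω] (μ : Ω → ℝ) (p : ℝ) (f : Ω → ℝ) : ℝ :=
  if p = 0 then Real.exp (pexp μ fun ω => Real.log (f ω))
  else (pexp μ fun ω => f ω ^ p) ^ (1 / p)

/-- `‖f‖_p = (E |f|^p)^{1/p}` for real-valued `f`. -/
def pnormAbs [Fintype Ω] (μ : Ω → ℝ) (p : ℝ) (f : Ω → ℝ) : ℝ :=
  (pexp μ fun ω => |f ω| ^ p) ^ (1 / p)

/-- Hölder conjugate `p' = p/(p-1)`, with the convention `0' = 0`. -/
def hconj (p : ℝ) : ℝ := if p = 0 then 0 else p / (p - 1)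

/-- The simple generator `L = Id − E`. -/
def simpleL [Fintype Ω] (μ : Ω → ℝ) : (Ω → ℝ) →ₗ[ℝ] (Ω → ℝ) where
  toFun f := fun ω => f ω - pexp μ f
  map_add' f g := by
    funext ω
    simp only [Pi.add_apply, pexp, mul_add, Finset.sum_add_distrib]
    ring
  map_smul' c f := by
    funext ω
    simp only [Pi.smul_apply, smul_eq_mul, pexp, RingHom.id_apply]
    rw [mul_sub, Finset.mul_sum]
    congr 1
    exact Finset.sum_congr rfl fun x _ => by ring

open Filter Topology intervalIntegral

theorem rpow_mul_rpow_add_swap_le {x y α β γ δ : ℝ} (hx : 0 < x) (hy : 0 < y)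
    (hsum : α + β = γ + δ) (hspread : |α - β| ≤ |γ - δ|) :
    x ^ α * y ^ β + x ^ β * y ^ α ≤ x ^ γ * y ^ δ + x ^ δ * y ^ γ := by
  have hcosh : ∀ a b, x ^ a * y ^ b + x ^ b * y ^ a =
      2 * exp ((a + b) / 2 * (log x + log y)) * cosh ((a - b) / 2 * (log x - log y)) := by
    intro a b
    have h₁ : log x * a + log y * b =
        (a + b) / 2 * (log x + log y) + (a - b) / 2 * (log x - log y) := by ring
    have h₂ : log x * b + log y * a =
        (a + b) / 2 * (log x + log y) + -((a - b) / 2 * (log x - log y)) := by ring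
    rw [cosh_eq, rpow_def_of_pos hx, rpow_def_of_pos hx, rpow_def_of_pos hy, rpow_def_of_pos hy,
      ← exp_add, ← exp_add, h₁, h₂, exp_add, exp_add]
    ring
  rw [hcosh, hcosh, hsum]
  gcongr
  rw [cosh_le_cosh, abs_mul, abs_mul, abs_div, abs_div, abs_two]
  gcongr

def rpowIntegral (a b κ : ℝ) : ℝ := ∫ u in a..b, u ^ (κ - 1)

section rpowIntegral

variable {a b : ℝ}

theorem intervalIntegrable_rpow_of_pos (ha : 0 < a) (hb : 0 < b) (κ : ℝ) :
    IntervalIntegrable (fun u => u ^ κ) MeasureTheory.volume a b :=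
  intervalIntegrable_rpow (Or.inr (Set.notMem_uIcc_of_lt ha hb))

theorem rpowIntegral_of_ne_zero (ha : 0 < a) (hb : 0 < b) {κ : ℝ} (hκ : κ ≠ 0) :
    rpowIntegral a b κ = (b ^ κ - a ^ κ) / κ := by
  rw [rpowIntegral, integral_rpow (Or.inr ⟨by simpa using hκ, Set.notMem_uIcc_of_lt ha hb⟩),
    sub_add_cancel]

theorem rpowIntegral_zero (ha : 0 < a) (hb : 0 < b) :
    rpowIntegral a b 0 = log b - log a := by
  have h : Set.EqOn (fun u : ℝ => u ^ ((0 : ℝ) - 1)) (·⁻¹) (Set.uIcc a b) := fun u _ => by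
    simp [rpow_neg_one]
  rw [rpowIntegral, integral_congr h, integral_inv (Set.notMem_uIcc_of_lt ha hb),
    log_div hb.ne' ha.ne']

theorem sub_rpow_eq_mul_rpowIntegral (ha : 0 < a) (hb : 0 < b) (κ : ℝ) :
    b ^ κ - a ^ κ = κ * rpowIntegral a b κ := by
  rcases eq_or_ne κ 0 with rfl | hκ
  · simp
  · rw [rpowIntegral_of_ne_zero ha hb hκ, mul_div_cancel₀ _ hκ]

theorem rpowIntegral_swap (a b κ : ℝ) : rpowIntegral b a κ = -rpowIntegral a b κ :=
  integral_symm a b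

/-- Log-convexity of `κ ↦ rpowIntegral a b κ`: written as a double integral and symmetrised in
the two variables, the product reduces to `rpow_mul_rpow_add_swap_le`. -/
theorem rpowIntegral_mul_le (ha : 0 < a) (hb : 0 < b) {α β γ δ : ℝ}
    (hsum : α + β = γ + δ) (hspread : |α - β| ≤ |γ - δ|) :
    rpowIntegral a b α * rpowIntegral a b β ≤ rpowIntegral a b γ * rpowIntegral a b δ := by
  wlog hab : a ≤ b generalizing a b
  · have h := this hb ha (le_of_not_ge hab)
    simpa only [rpowIntegral_swap b a, neg_mul_neg] using h
  set F := rpowIntegral a b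
  have hint (κ : ℝ) := intervalIntegrable_rpow_of_pos ha hb (κ - 1)
  have hsym (κ₁ κ₂ : ℝ) :
      ∫ u in a..b, (u ^ (κ₁ - 1) * F κ₂ + u ^ (κ₂ - 1) * F κ₁) = 2 * (F κ₁ * F κ₂) := by
    rw [integral_add ((hint κ₁).mul_const _) ((hint κ₂).mul_const _), integral_mul_const,
      integral_mul_const]
    simp only [F, rpowIntegral]
    ring
  have hinner (u : ℝ) (κ₁ κ₂ : ℝ) : u ^ (κ₁ - 1) * F κ₂ + u ^ (κ₂ - 1) * F κ₁ =
      ∫ v in a..b, (u ^ (κ₁ - 1) * v ^ (κ₂ - 1) + u ^ (κ₂ - 1) * v ^ (κ₁ - 1)) := by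
    rw [integral_add ((hint κ₂).const_mul _) ((hint κ₁).const_mul _), integral_const_mul,
      integral_const_mul]
    rfl
  have hle : ∫ u in a..b, (u ^ (α - 1) * F β + u ^ (β - 1) * F α) ≤
      ∫ u in a..b, (u ^ (γ - 1) * F δ + u ^ (δ - 1) * F γ) := by
    refine integral_mono_on hab (((hint α).mul_const _).add ((hint β).mul_const _))
      (((hint γ).mul_const _).add ((hint δ).mul_const _)) fun u hu => ?_
    rw [hinner, hinner]
    refine integral_mono_on hab (((hint β).const_mul _).add ((hint α).const_mul _))
      (((hint δ).const_mul _).add ((hint γ).const_mul _)) fun v hv => ?_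
    exact rpow_mul_rpow_add_swap_le (ha.trans_le hu.1) (ha.trans_le hv.1)
      (by linarith) (by rwa [show α - 1 - (β - 1) = α - β by ring,
        show γ - 1 - (δ - 1) = γ - δ by ring])
  rw [hsym, hsym] at hle
  linarith

end rpowIntegral

section TwoPoint

variable {a b : ℝ}

theorem sub_eq_rpowIntegral_one (ha : 0 < a) (hb : 0 < b) :
    b - a = rpowIntegral a b 1 := by
  simpa using sub_rpow_eq_mul_rpowIntegral ha hb 1

theorem sub_rpow_mul_log_sub_le (ha : 0 < a) (hb : 0 < b) {m : ℝ} (hm : m < 1) :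
    m * ((a ^ m - b ^ m) * (log a - log b)) ≤
      m ^ 2 / (m - 1) * ((a ^ (m - 1) - b ^ (m - 1)) * (a - b)) := by
  have hm1 : m - 1 ≠ 0 := by linarith
  have key := rpowIntegral_mul_le hb ha (show m + 0 = (m - 1) + 1 by ring) <| by
    rw [sub_zero, show m - 1 - 1 = m - 2 by ring, abs_of_neg (by linarith : m - 2 < 0)]
    exact abs_le.mpr ⟨by linarith, by linarith⟩
  rw [sub_rpow_eq_mul_rpowIntegral hb ha, ← rpowIntegral_zero hb ha,
    sub_rpow_eq_mul_rpowIntegral hb ha, sub_eq_rpowIntegral_one hb ha]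
  calc m * (m * rpowIntegral b a m * rpowIntegral b a 0)
      = m ^ 2 * (rpowIntegral b a m * rpowIntegral b a 0) := by ring
    _ ≤ m ^ 2 * (rpowIntegral b a (m - 1) * rpowIntegral b a 1) := by gcongr
    _ = _ := by field_simp

theorem sub_rpow_mul_sub_rpow_le (ha : 0 < a) (hb : 0 < b) {m r : ℝ} (hm : m < 1) (hr : 1 < r) :
    r ^ 2 / (r - 1) *
        ((a ^ (m * (r - 1) / r) - b ^ (m * (r - 1) / r)) * (a ^ (m / r) - b ^ (m / r))) ≤
      m ^ 2 / (m - 1) * ((a ^ (m - 1) - b ^ (m - 1)) * (a - b)) := by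
  have hm1 : m - 1 ≠ 0 := by linarith
  have hr0 : 0 < r := by linarith
  have hr1 : r - 1 ≠ 0 := by linarith
  have key := rpowIntegral_mul_le hb ha (α := m * (r - 1) / r) (β := m / r)
    (show _ = (m - 1) + 1 by field_simp; ring) <| by
    rw [show m * (r - 1) / r - m / r = m * ((r - 2) / r) by field_simp; ring,
      show m - 1 - 1 = m - 2 by ring, abs_of_neg (by linarith : m - 2 < 0), abs_mul, neg_sub]
    have : |(r - 2) / r| ≤ 1 := by
      rw [abs_le, le_div_iff₀ hr0, div_le_iff₀ hr0]; constructor <;> linarith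
    calc |m| * |(r - 2) / r| ≤ |m| * 1 := by gcongr
      _ ≤ 2 - m := by rw [mul_one]; exact abs_le.mpr ⟨by linarith, by linarith⟩
  rw [sub_rpow_eq_mul_rpowIntegral hb ha, sub_rpow_eq_mul_rpowIntegral hb ha,
    sub_rpow_eq_mul_rpowIntegral hb ha, sub_eq_rpowIntegral_one hb ha]
  calc r ^ 2 / (r - 1) * (m * (r - 1) / r * rpowIntegral b a (m * (r - 1) / r) *
        (m / r * rpowIntegral b a (m / r)))
      = m ^ 2 * (rpowIntegral b a (m * (r - 1) / r) * rpowIntegral b a (m / r)) := by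
        field_simp
    _ ≤ m ^ 2 * (rpowIntegral b a (m - 1) * rpowIntegral b a 1) := by gcongr
    _ = _ := by field_simp

theorem sub_rpow_mul_sub_nonpos (ha : 0 < a) (hb : 0 < b) {ν : ℝ} (hν : ν ≤ 0) :
    (a ^ ν - b ^ ν) * (a - b) ≤ 0 := by
  rcases le_total a b with h | h
  · exact mul_nonpos_of_nonneg_of_nonpos (by linarith [rpow_le_rpow_of_nonpos ha h hν])
      (by linarith)
  · exact mul_nonpos_of_nonpos_of_nonneg (by linarith [rpow_le_rpow_of_nonpos hb h hν])
      (by linarith)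

end TwoPoint

theorem tendsto_div_of_hasDerivAt_of_eq_zero {f g : ℝ → ℝ} {f' g' a : ℝ}
    (hf : HasDerivAt f f' a) (hg : HasDerivAt g g' a) (hfa : f a = 0) (hga : g a = 0)
    (hg' : g' ≠ 0) : Tendsto (fun x => f x / g x) (𝓝[≠] a) (𝓝 (f' / g')) := by
  refine ((hasDerivAt_iff_tendsto_slope.1 hf).div (hasDerivAt_iff_tendsto_slope.1 hg) hg').congr'
    (eventually_nhdsWithin_of_forall fun x hx => ?_)
  rw [Pi.div_apply, slope_def_field, slope_def_field, hfa, hga, sub_zero, sub_zero,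
    div_div_div_cancel_right₀ (sub_ne_zero.2 hx)]

theorem le_of_hasDerivAt_nonneg_of_ne {Ψ : ℝ → ℝ} {a b c : ℝ} (hab : a ≤ b)
    (hΨ : ContinuousOn Ψ (Set.Icc a b))
    (hd : ∀ s ∈ Set.Ioo a b, s ≠ c → ∃ d, HasDerivAt Ψ d s ∧ 0 ≤ d) : Ψ a ≤ Ψ b := by
  have key : ∀ a' b', a ≤ a' → b' ≤ b → a' ≤ b' → c ∉ Set.Ioo a' b' → Ψ a' ≤ Ψ b' := by
    intro a' b' ha hb hab' hc
    have hsub : Set.Ioo a' b' ⊆ Set.Ioo a b := Set.Ioo_subset_Ioo ha hb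
    have hder (s : ℝ) (hs : s ∈ Set.Ioo a' b') := hd s (hsub hs) (ne_of_mem_of_not_mem hs hc)
    refine monotoneOn_of_deriv_nonneg (convex_Icc a' b')
      (hΨ.mono (Set.Icc_subset_Icc ha hb)) (fun s hs => ?_) (fun s hs => ?_)
      (Set.left_mem_Icc.2 hab') (Set.right_mem_Icc.2 hab') hab'
    · rw [interior_Icc] at hs
      obtain ⟨d, hd, -⟩ := hder s hs
      exact hd.differentiableAt.differentiableWithinAt
    · rw [interior_Icc] at hs
      obtain ⟨d, hd, hd0⟩ := hder s hs
      rwa [hd.deriv]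
  by_cases hc : c ∈ Set.Ioo a b
  · exact (key a c le_rfl hc.2.le hc.1.le fun h => h.2.false).trans
      (key c b hc.1.le le_rfl hc.2.le fun h => h.1.false)
  · exact key a b le_rfl le_rfl hab hc

section Heat

variable [Fintype Ω]

theorem heat_zero (L : (Ω → ℝ) →ₗ[ℝ] (Ω → ℝ)) (f : Ω → ℝ) : heat L 0 f = f := by
  rw [heat, neg_zero, zero_smul, NormedSpace.exp_zero]
  rfl

theorem hasDerivAt_heat_apply (L : (Ω → ℝ) →ₗ[ℝ] (Ω → ℝ)) (f : Ω → ℝ) (ω : Ω) (s : ℝ) :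
    HasDerivAt (fun s => heat L s f ω) (-L (heat L s f) ω) s := by
  set A := LinearMap.toContinuousLinearMap L
  have hexp : HasDerivAt (fun s : ℝ => NormedSpace.exp ((-s) • A))
      (-(A * NormedSpace.exp ((-s) • A))) s := by
    have h := (hasDerivAt_exp_smul_const' A (-s)).scomp s (hasDerivAt_neg s)
    rwa [neg_one_smul] at h
  simpa [heat, A] using hasDerivAt_pi.1 (hexp.clm_apply (hasDerivAt_const s f)) ω

theorem le_exp_apply_of_nonneg {B : (Ω → ℝ) →L[ℝ] (Ω → ℝ)} (hB : ∀ g, 0 ≤ g → 0 ≤ B g)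
    {f : Ω → ℝ} (hf : 0 ≤ f) : f ≤ NormedSpace.exp B f := by
  have hpow (n : ℕ) : 0 ≤ (B ^ n) f := by
    induction n with
    | zero => simpa using hf
    | succ n ih => rw [pow_succ']; exact hB _ ih
  have hsum := NormedSpace.expSeries_summable' (𝕂 := ℝ) B
  have hexp : NormedSpace.exp B f = ∑' n : ℕ, (n.factorial⁻¹ : ℝ) • (B ^ n) f := by
    rw [NormedSpace.exp_eq_tsum ℝ]
    exact (ContinuousLinearMap.apply ℝ (Ω → ℝ) f).map_tsum hsum
  rw [hexp]
  refine le_trans ?_ ((hsum.mapL (ContinuousLinearMap.apply ℝ (Ω → ℝ) f)).le_tsum 0 fun n _ => ?_)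
  · simp
  · simpa using smul_nonneg (by positivity) (hpow n)

end Heat

def logPnorm [Fintype Ω] (μ : Ω → ℝ) (p : ℝ) (f : Ω → ℝ) : ℝ :=
  if p = 0 then pexp μ (fun ω => log (f ω)) else log (pexp μ fun ω => f ω ^ p) / p

section LogPnorm

variable [Fintype Ω] {μ : Ω → ℝ}

theorem pexp_pos (hμ : ∀ ω, 0 ≤ μ ω) (hμ1 : ∑ ω, μ ω = 1) {g : Ω → ℝ} (hg : ∀ ω, 0 < g ω) :
    0 < pexp μ g := by
  obtain ⟨ω, -, hω⟩ := exists_lt_of_sum_lt (s := univ) (f := 0) (g := μ) (by simp [hμ1])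
  exact sum_pos' (fun ω _ => mul_nonneg (hμ ω) (hg ω).le) ⟨ω, mem_univ ω, mul_pos hω (hg ω)⟩

theorem pnorm_eq_exp_logPnorm {p : ℝ} {f : Ω → ℝ} (hP : 0 < pexp μ fun ω => f ω ^ p) :
    pnorm μ p f = exp (logPnorm μ p f) := by
  unfold pnorm logPnorm
  split_ifs
  · rfl
  · rw [rpow_def_of_pos hP, mul_one_div]

theorem entE_rpow {v : Ω → ℝ} (hv : ∀ ω, 0 < v ω) (Q : ℝ) :
    entE μ (fun ω => v ω ^ Q) = Q * pexp μ (fun ω => v ω ^ Q * log (v ω)) -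
      pexp μ (fun ω => v ω ^ Q) * log (pexp μ fun ω => v ω ^ Q) := by
  simp only [entE, pexp, mul_sum, log_rpow (hv _)]
  congr 1
  exact sum_congr rfl fun ω _ => by ring

variable {v : ℝ → Ω → ℝ} {v' : Ω → ℝ} {Q : ℝ → ℝ} {Q' s : ℝ}

theorem hasDerivAt_pexp_rpow (hv : ∀ ω, HasDerivAt (fun s => v s ω) (v' ω) s)
    (hvpos : ∀ ω, 0 < v s ω) (hQ : HasDerivAt Q Q' s) :
    HasDerivAt (fun s => pexp μ fun ω => v s ω ^ Q s)
      (Q' * pexp μ (fun ω => v s ω ^ Q s * log (v s ω)) +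
        Q s * pexp μ (fun ω => v s ω ^ (Q s - 1) * v' ω)) s := by
  refine (HasDerivAt.fun_sum (u := univ) fun ω _ =>
    ((hv ω).rpow hQ (hvpos ω)).const_mul (μ ω)).congr_deriv ?_
  simp only [pexp, mul_sum, ← sum_add_distrib]
  exact sum_congr rfl fun ω _ => by ring

theorem hasDerivAt_logPnorm (hv : ∀ ω, HasDerivAt (fun s => v s ω) (v' ω) s)
    (hvpos : ∀ ω, 0 < v s ω) (hQ : HasDerivAt Q Q' s) (hQs : Q s ≠ 0)
    (hP : 0 < pexp μ fun ω => v s ω ^ Q s) :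
    HasDerivAt (fun s => logPnorm μ (Q s) (v s))
      ((Q' * entE μ (fun ω => v s ω ^ Q s) +
          Q s ^ 2 * pexp μ (fun ω => v s ω ^ (Q s - 1) * v' ω)) /
        (pexp μ (fun ω => v s ω ^ Q s) * Q s ^ 2)) s := by
  have h := ((hasDerivAt_pexp_rpow hv hvpos hQ).log hP.ne').div hQ hQs
  have heq : (fun s => logPnorm μ (Q s) (v s)) =ᶠ[𝓝 s]
      fun s => log (pexp μ fun ω => v s ω ^ Q s) / Q s := by
    filter_upwards [hQ.continuousAt.eventually_ne hQs] with s' hs'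
    simp only [logPnorm, if_neg hs']
  refine (h.congr_of_eventuallyEq heq).congr_deriv ?_
  rw [entE_rpow hvpos]
  field_simp
  ring

theorem continuousAt_logPnorm (hμ : ∀ ω, 0 ≤ μ ω) (hμ1 : ∑ ω, μ ω = 1)
    (hv : ∀ ω, HasDerivAt (fun s => v s ω) (v' ω) s) (hvpos : ∀ ω, 0 < v s ω)
    (hQ : HasDerivAt Q Q' s) (hQ' : Q' ≠ 0) :
    ContinuousAt (fun s => logPnorm μ (Q s) (v s)) s := by
  have hP := pexp_pos hμ hμ1 fun ω => rpow_pos_of_pos (hvpos ω) (Q s)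
  rcases ne_or_eq (Q s) 0 with hQs | hQs
  · exact (hasDerivAt_logPnorm hv hvpos hQ hQs hP).continuousAt
  -- at a zero of `Q` the quotient `log (E v ^ Q) / Q` is `0 / 0`: l'Hôpital
  have hP1 : pexp μ (fun _ => 1) = 1 := by simp [pexp, hμ1]
  have hG := (hasDerivAt_pexp_rpow hv hvpos hQ).log hP.ne'
  simp only [hQs, rpow_zero, one_mul, zero_mul, add_zero, hP1, div_one] at hG
  have hlim := tendsto_div_of_hasDerivAt_of_eq_zero hG hQ (by simp [hQs, hP1]) hQs hQ'
  rw [mul_div_cancel_left₀ _ hQ'] at hlim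
  have hne : ∀ᶠ s' in 𝓝[≠] s, Q s' ≠ 0 := by
    filter_upwards [(hasDerivAt_iff_tendsto_slope.1 hQ).eventually_ne hQ'] with s' hs' h0
    simp [slope_def_field, h0, hQs] at hs'
  rw [← continuousWithinAt_compl_self, ContinuousWithinAt]
  simp only [logPnorm, hQs, if_pos]
  refine hlim.congr' ?_
  filter_upwards [hne] with s' hs'
  simp only [if_neg hs']

end LogPnorm

/-- The solution of `Q' = -(4 / C) (1 - Q)`, `Q 0 = p`. -/
def grossExponent (p C s : ℝ) : ℝ := 1 - (1 - p) * exp (4 * s / C)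

section GrossExponent

variable {p C : ℝ}

theorem grossExponent_zero : grossExponent p C 0 = p := by simp [grossExponent]

theorem grossExponent_lt_one (hp : p < 1) (s : ℝ) : grossExponent p C s < 1 := by
  have := mul_pos (sub_pos.2 hp) (exp_pos (4 * s / C))
  rw [grossExponent]
  linarith

theorem hasDerivAt_grossExponent (p C s : ℝ) :
    HasDerivAt (grossExponent p C) (-(4 / C) * (1 - grossExponent p C s)) s := by
  refine ((((hasDerivAt_id s).const_mul 4).div_const C).exp.const_mul (1 - p)).const_sub 1
    |>.congr_deriv ?_
  rw [grossExponent, id]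
  ring

theorem strictAnti_grossExponent (hp : p < 1) (hC : 0 < C) : StrictAnti (grossExponent p C) :=
  fun a b hab => by
    have := exp_lt_exp.2 (div_lt_div_of_pos_right (by linarith : 4 * a < 4 * b) hC)
    simp only [grossExponent]
    nlinarith

end GrossExponent

theorem LinearMap.apply_eq_sum_toMatrix' [Fintype Ω] [DecidableEq Ω]
    (L : (Ω → ℝ) →ₗ[ℝ] (Ω → ℝ)) (g : Ω → ℝ) (ω : Ω) :
    L g ω = ∑ x, LinearMap.toMatrix' L ω x * g x := by
  rw [← LinearMap.toMatrix'_mulVec]; rfl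

namespace IsGen

variable [Fintype Ω] {μ : Ω → ℝ} {L : (Ω → ℝ) →ₗ[ℝ] (Ω → ℝ)} (hL : IsGen μ L)
include hL

theorem sum_toMatrix' [DecidableEq Ω] (ω : Ω) : ∑ x, LinearMap.toMatrix' L ω x = 0 := by
  simpa [hL.1] using (L.apply_eq_sum_toMatrix' (fun _ => 1) ω).symm

theorem mul_toMatrix'_comm [DecidableEq Ω] (ω x : Ω) :
    μ ω * LinearMap.toMatrix' L ω x = μ x * LinearMap.toMatrix' L x ω := by
  simpa [pexp, Pi.single_apply] using hL.2.1 (Pi.single ω 1) (Pi.single x 1)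

theorem toMatrix'_nonpos [DecidableEq Ω] {ω x : Ω} (h : ω ≠ x) :
    LinearMap.toMatrix' L ω x ≤ 0 := by
  have hmax : ∀ y, (-Pi.single x 1 : Ω → ℝ) y ≤ (-Pi.single x 1 : Ω → ℝ) ω := by
    intro y
    simp only [Pi.neg_apply, Pi.single_apply, if_neg h]
    split_ifs <;> norm_num
  simpa using hL.2.2.2 _ ω hmax

theorem dform_eq_sum [DecidableEq Ω] (f g : Ω → ℝ) :
    dform μ L f g = ∑ ω, ∑ x,
      -(μ ω * LinearMap.toMatrix' L ω x) / 2 * ((f x - f ω) * (g x - g ω)) := by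
  set K := LinearMap.toMatrix' L
  have hrow (h : Ω → ℝ) : ∑ ω, ∑ x, μ ω * K ω x * h ω = 0 :=
    sum_eq_zero fun ω _ => by rw [← sum_mul, ← mul_sum, hL.sum_toMatrix', mul_zero, zero_mul]
  have hswap (F : Ω → Ω → ℝ) :
      ∑ ω, ∑ x, μ ω * K ω x * F x ω = ∑ ω, ∑ x, μ ω * K ω x * F ω x := by
    rw [sum_comm]
    exact sum_congr rfl fun ω _ => sum_congr rfl fun x _ => by rw [hL.mul_toMatrix'_comm]
  have hdiag : ∑ ω, ∑ x, μ ω * K ω x * (f x * g x) = 0 := by rw [hswap]; exact hrow _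
  have hcross : ∑ ω, ∑ x, μ ω * K ω x * (f x * g ω) = ∑ ω, ∑ x, μ ω * K ω x * (f ω * g x) :=
    hswap _
  have hdform : dform μ L f g = ∑ ω, ∑ x, μ ω * K ω x * (f ω * g x) := by
    simp only [dform, pexp, L.apply_eq_sum_toMatrix', mul_sum]
    exact sum_congr rfl fun ω _ => sum_congr rfl fun x _ => by ring
  have hexpand (ω x : Ω) : -(μ ω * K ω x) / 2 * ((f x - f ω) * (g x - g ω)) =
      -(1 / 2) * (μ ω * K ω x * (f x * g x)) + 1 / 2 * (μ ω * K ω x * (f x * g ω)) +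
        1 / 2 * (μ ω * K ω x * (f ω * g x)) - 1 / 2 * (μ ω * K ω x * (f ω * g ω)) := by ring
  simp only [hexpand, sum_add_distrib, sum_sub_distrib, ← mul_sum, hdiag, hcross, hrow, hdform]
  ring

theorem mul_dform_le_mul_dform (hμ : ∀ ω, 0 ≤ μ ω) {f₁ g₁ f₂ g₂ : Ω → ℝ} {c₁ c₂ : ℝ}
    (h : ∀ ω x, c₁ * ((f₁ x - f₁ ω) * (g₁ x - g₁ ω)) ≤ c₂ * ((f₂ x - f₂ ω) * (g₂ x - g₂ ω))) :
    c₁ * dform μ L f₁ g₁ ≤ c₂ * dform μ L f₂ g₂ := by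
  classical
  rw [hL.dform_eq_sum, hL.dform_eq_sum, mul_sum, mul_sum]
  refine sum_le_sum fun ω _ => ?_
  rw [mul_sum, mul_sum]
  refine sum_le_sum fun x _ => ?_
  rcases eq_or_ne ω x with rfl | hωx
  · simp
  have hw : 0 ≤ -(μ ω * LinearMap.toMatrix' L ω x) / 2 := by
    have := mul_nonpos_of_nonneg_of_nonpos (hμ ω) (hL.toMatrix'_nonpos hωx)
    linarith
  linarith [mul_le_mul_of_nonneg_left (h ω x) hw]

theorem dform_nonpos (hμ : ∀ ω, 0 ≤ μ ω) {f g : Ω → ℝ}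
    (h : ∀ ω x, (f x - f ω) * (g x - g ω) ≤ 0) : dform μ L f g ≤ 0 := by
  simpa using hL.mul_dform_le_mul_dform hμ (c₁ := 1) (c₂ := 0) (f₂ := f) (g₂ := g)
    (by simpa using h)

theorem exists_le_smul : ∃ c : ℝ, ∀ g : Ω → ℝ, 0 ≤ g → L g ≤ c • g := by
  classical
  obtain ⟨c, hc⟩ := Finite.exists_le fun ω => LinearMap.toMatrix' L ω ω
  refine ⟨c, fun g hg ω => ?_⟩
  rw [L.apply_eq_sum_toMatrix', ← add_sum_erase _ _ (mem_univ ω)]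
  have hoff : ∑ x ∈ univ.erase ω, LinearMap.toMatrix' L ω x * g x ≤ 0 :=
    sum_nonpos fun x hx => mul_nonpos_of_nonpos_of_nonneg
      (hL.toMatrix'_nonpos (ne_of_mem_erase hx).symm) (hg x)
  have hdiag := mul_le_mul_of_nonneg_right (hc ω) (hg ω)
  simp only [Pi.smul_apply, smul_eq_mul]
  linarith

theorem heat_pos {f : Ω → ℝ} (hf : ∀ ω, 0 < f ω) {s : ℝ} (hs : 0 ≤ s)
    (ω : Ω) : 0 < heat L s f ω := by
  obtain ⟨c, hc⟩ := hL.exists_le_smul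
  set A := LinearMap.toContinuousLinearMap L
  set B := s • (c • 1 - A)
  have hB : ∀ g, 0 ≤ g → 0 ≤ B g := fun g hg x => by
    have := hc g hg x
    simp only [Pi.smul_apply, smul_eq_mul] at this
    simp only [Pi.zero_apply, smul_apply, sub_apply, one_apply_eq_self,
      LinearMap.coe_toContinuousLinearMap', Pi.smul_apply, Pi.sub_apply, smul_eq_mul, B, A]
    exact mul_nonneg hs (by linarith)
  have hsplit : (-s) • A = algebraMap ℝ _ (-(s * c)) + B := by
    rw [Algebra.algebraMap_eq_smul_one]
    simp only [B, smul_sub, smul_smul]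
    module
  have hheat : heat L s f = Real.exp (-(s * c)) • NormedSpace.exp B f := by
    have hball (x : (Ω → ℝ) →L[ℝ] (Ω → ℝ)) :
        x ∈ Metric.eball 0 (NormedSpace.expSeries ℝ ((Ω → ℝ) →L[ℝ] (Ω → ℝ))).radius :=
      (NormedSpace.expSeries_radius_eq_top ℝ ((Ω → ℝ) →L[ℝ] (Ω → ℝ))).symm ▸ edist_lt_top _ _
    rw [heat, hsplit, NormedSpace.exp_add_of_commute_of_mem_ball
      (Algebra.commute_algebraMap_left _ _) (hball _) (hball _),
      ← NormedSpace.algebraMap_exp_comm, ← Real.exp_eq_exp_ℝ, Algebra.algebraMap_eq_smul_one]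
    rfl
  rw [hheat]
  exact mul_pos (exp_pos _) ((hf ω).trans_le (le_exp_apply_of_nonneg hB (fun x => (hf x).le) ω))

theorem logSob_of_one_le (hμ : ∀ ω, 0 ≤ μ ω) {r C : ℝ} (hr : 1 ≤ r)
    (hC : 0 ≤ C) (hLS : LogSob μ L r C) {m : ℝ} (hm : m < 1) (hm0 : m ≠ 0) :
    LogSob μ L m C := by
  rw [LogSob, if_neg hm0, if_neg hm.ne]
  intro f hf
  have hC4 : 0 ≤ C / 4 := by positivity
  rcases hr.eq_or_lt with rfl | hr
  · rw [LogSob, if_neg one_ne_zero, if_pos rfl] at hLS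
    refine (hLS _ fun ω => rpow_pos_of_pos (hf ω) m).trans <|
      hL.mul_dform_le_mul_dform hμ fun ω x => ?_
    rw [log_rpow (hf x), log_rpow (hf ω)]
    calc C / 4 * ((f x ^ m - f ω ^ m) * (m * log (f x) - m * log (f ω)))
        = C / 4 * (m * ((f x ^ m - f ω ^ m) * (log (f x) - log (f ω)))) := by ring
      _ ≤ C / 4 * (m ^ 2 / (m - 1) * ((f x ^ (m - 1) - f ω ^ (m - 1)) * (f x - f ω))) :=
        mul_le_mul_of_nonneg_left (sub_rpow_mul_log_sub_le (hf x) (hf ω) hm) hC4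
      _ = _ := by rw [← mul_assoc (C / 4), div_mul_div_comm]
  · rw [LogSob, if_neg (by linarith), if_neg hr.ne'] at hLS
    have hpow (κ : ℝ) (ω : Ω) : (f ω ^ (m / r)) ^ κ = f ω ^ (m / r * κ) :=
      (rpow_mul (hf ω).le _ _).symm
    have h := hLS _ fun ω => rpow_pos_of_pos (hf ω) (m / r)
    simp only [hpow, div_mul_cancel₀ m (by linarith : r ≠ 0)] at h
    refine h.trans <| hL.mul_dform_le_mul_dform hμ fun ω x => ?_
    rw [show m / r * (r - 1) = m * (r - 1) / r by ring]
    calc C * r ^ 2 / (4 * (r - 1)) * ((f x ^ (m * (r - 1) / r) - f ω ^ (m * (r - 1) / r)) *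
          (f x ^ (m / r) - f ω ^ (m / r)))
        = C / 4 * (r ^ 2 / (r - 1) * ((f x ^ (m * (r - 1) / r) - f ω ^ (m * (r - 1) / r)) *
          (f x ^ (m / r) - f ω ^ (m / r)))) := by rw [← mul_assoc (C / 4), div_mul_div_comm]
      _ ≤ C / 4 * (m ^ 2 / (m - 1) * ((f x ^ (m - 1) - f ω ^ (m - 1)) * (f x - f ω))) :=
        mul_le_mul_of_nonneg_left (sub_rpow_mul_sub_rpow_le (hf x) (hf ω) hm hr) hC4
      _ = _ := by rw [← mul_assoc (C / 4), div_mul_div_comm]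

theorem logSob_mono_const (hμ : ∀ ω, 0 ≤ μ ω) {m C C' : ℝ} (hm : m < 1)
    (hm0 : m ≠ 0) (hLS : LogSob μ L m C) (hCC' : C ≤ C') : LogSob μ L m C' := by
  rw [LogSob, if_neg hm0, if_neg hm.ne] at hLS ⊢
  intro f hf
  have hdform : dform μ L (fun ω => f ω ^ (m - 1)) f ≤ 0 :=
    hL.dform_nonpos hμ fun ω x => sub_rpow_mul_sub_nonpos (hf x) (hf ω) (by linarith)
  have hcoef : m ^ 2 / (4 * (m - 1)) ≤ 0 :=
    div_nonpos_of_nonneg_of_nonpos (sq_nonneg m) (by linarith)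
  calc entE μ (fun ω => f ω ^ m) ≤ C * (m ^ 2 / (4 * (m - 1)) * dform μ L _ f) := by
        rw [← mul_assoc, ← mul_div_assoc]; exact hLS f hf
    _ ≤ C' * (m ^ 2 / (4 * (m - 1)) * dform μ L _ f) := by
        gcongr; exact mul_nonneg_of_nonpos_of_nonpos hcoef hdform
    _ = _ := by rw [← mul_assoc, ← mul_div_assoc]

theorem exists_hasDerivAt_logPnorm_heat_nonneg {p C : ℝ} {f : Ω → ℝ} (hμ : ∀ ω, 0 ≤ μ ω)
    (hμ1 : ∑ ω, μ ω = 1) (hC : 0 < C) (hp : p < 1) (hf : ∀ ω, 0 < f ω) {s : ℝ} (hs : 0 ≤ s)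
    (hQs : grossExponent p C s ≠ 0) (hLS : LogSob μ L (grossExponent p C s) C) :
    ∃ d, HasDerivAt (fun s => logPnorm μ (grossExponent p C s) (heat L s f)) d s ∧ 0 ≤ d := by
  set Q := grossExponent p C s
  set u := heat L s f
  have hu := hL.heat_pos hf hs
  have hP := pexp_pos hμ hμ1 fun ω => rpow_pos_of_pos (hu ω) Q
  refine ⟨_, hasDerivAt_logPnorm (fun ω => hasDerivAt_heat_apply L f ω s) hu
    (hasDerivAt_grossExponent p C s) hQs hP, div_nonneg ?_ (by positivity)⟩
  rw [LogSob, if_neg hQs, if_neg (grossExponent_lt_one hp s).ne] at hLS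
  set D := dform μ L (fun ω => u ω ^ (Q - 1)) u
  have hD : pexp μ (fun ω => u ω ^ (Q - 1) * -L u ω) = -D := by
    simp only [D, dform, pexp, mul_neg, ← sum_neg_distrib]
  have hQ1 : Q - 1 ≠ 0 := (sub_neg.2 (grossExponent_lt_one hp s)).ne
  -- the decay rate of `Q` is chosen so that the logSob bound turns `Q' Ent` into exactly `Q² 𝓔`
  calc 0 = -(4 / C) * (1 - Q) * (C * Q ^ 2 / (4 * (Q - 1)) * D) + Q ^ 2 * -D := by
        field_simp; ring
    _ ≤ -(4 / C) * (1 - Q) * entE μ (fun ω => u ω ^ Q) + Q ^ 2 * -D := by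
        gcongr ?_ + _
        refine mul_le_mul_of_nonpos_left (hLS u hu) ?_
        have := grossExponent_lt_one hp (C := C) s
        have : 0 < 4 / C := by positivity
        nlinarith
    _ = _ := by rw [hD]

theorem logPnorm_le_logPnorm_heat {p C : ℝ} {f : Ω → ℝ} (hμ : ∀ ω, 0 ≤ μ ω)
    (hμ1 : ∑ ω, μ ω = 1) (hC : 0 < C) (hp : p < 1) (hLS : ∀ m < 1, m ≠ 0 → LogSob μ L m C) (hf : ∀ ω, 0 < f ω)
    {t : ℝ} (ht : 0 ≤ t) :
    logPnorm μ p f ≤ logPnorm μ (grossExponent p C t) (heat L t f) := by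
  set Q := grossExponent p C
  have hQ' (s : ℝ) : -(4 / C) * (1 - Q s) ≠ 0 :=
    mul_ne_zero (by simp [hC.ne']) (sub_pos.2 (grossExponent_lt_one hp s)).ne'
  have hcont : ContinuousOn (fun s => logPnorm μ (Q s) (heat L s f)) (Set.Icc 0 t) :=
    fun s hs => (continuousAt_logPnorm hμ hμ1 (fun ω => hasDerivAt_heat_apply L f ω s)
      (hL.heat_pos hf hs.1) (hasDerivAt_grossExponent p C s) (hQ' s)).continuousWithinAt
  obtain ⟨c, hc⟩ : ∃ c, ∀ s, s ≠ c → Q s ≠ 0 := by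
    by_cases h : ∃ c, Q c = 0
    · obtain ⟨c, hc⟩ := h
      exact ⟨c, fun s hs h0 => hs ((strictAnti_grossExponent hp hC).injective (h0.trans hc.symm))⟩
    · exact ⟨0, fun s _ h0 => h ⟨s, h0⟩⟩
  have h := le_of_hasDerivAt_nonneg_of_ne ht hcont fun s hs hsc =>
    hL.exists_hasDerivAt_logPnorm_heat_nonneg hμ hμ1 hC hp hf hs.1.le (hc s hsc)
      (hLS _ (grossExponent_lt_one hp s) (hc s hsc))
  simpa only [Q, grossExponent_zero, heat_zero] using h

end IsGen

/-- reverse hypercontractivity from the `r`-logSob inequality, `r ≥ 1`. -/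
theorem reverse_hypercontractivity_of_logSob [Fintype Ω] (μ : Ω → ℝ)
    (hμpos : ∀ ω, 0 < μ ω) (hμ1 : ∑ ω, μ ω = 1)
    (L : (Ω → ℝ) →ₗ[ℝ] (Ω → ℝ)) (hL : IsGen μ L)
    (r C : ℝ) (hr : 1 ≤ r) (hC : 0 < C) (hLS : LogSob μ L r C)
    (p q : ℝ) (hqp : q < p) (hp1 : p < 1)
    (t : ℝ) (ht : C / 4 * Real.log ((1 - q) / (1 - p)) ≤ t)
    (f : Ω → ℝ) (hf : ∀ ω, 0 < f ω) :
    pnorm μ p f ≤ pnorm μ q (heat L t f) := by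
  have hμ : ∀ ω, 0 ≤ μ ω := fun ω => (hμpos ω).le
  have hlog : 0 < log ((1 - q) / (1 - p)) :=
    log_pos ((one_lt_div (by linarith)).2 (by linarith))
  have ht0 : 0 < t := lt_of_lt_of_le (by positivity) ht
  -- enlarge `C` so that the threshold is exactly `t`
  set C' := 4 * t / log ((1 - q) / (1 - p))
  have hCC' : C ≤ C' := by rw [le_div_iff₀ hlog]; linarith
  have hLS' (m : ℝ) (hm : m < 1) (hm0 : m ≠ 0) : LogSob μ L m C' :=
    hL.logSob_mono_const hμ hm hm0 (hL.logSob_of_one_le hμ hr hC.le hLS hm hm0) hCC'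
  have hq : grossExponent p C' t = q := by
    rw [grossExponent, div_div_cancel₀ (by positivity),
      exp_log (div_pos (by linarith) (by linarith)), mul_div_cancel₀ _ (by linarith)]
    ring
  have h := hL.logPnorm_le_logPnorm_heat hμ hμ1 (hC.trans_le hCC') hp1 hLS' hf ht0.le
  rw [hq] at h
  rw [pnorm_eq_exp_logPnorm (pexp_pos hμ hμ1 fun ω => rpow_pos_of_pos (hf ω) p),
    pnorm_eq_exp_logPnorm (pexp_pos hμ hμ1 fun ω => rpow_pos_of_pos (hL.heat_pos hf ht0.le ω) q)]
  exact exp_le_exp.2 h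

end
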